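/- arXiv:2509.06064 — 4 statements merged into one kernel-verified Lean document; each statement's English description precedes it below -/
import Mathlib

section
/- Let G be a finite connected graph and O an orbit of Aut(G) whose vertices are pairwise false twins (any two vertices of O have the same open neighborhood). Then O is a terminal orbit of G. -/
/-- The orbit of a vertex under the automorphism group of `G`. -/
def GraphOrbit {V : Type*} (G : SimpleGraph V) (v : V) : Set V :=
  {u | ∃ φ : G ≃g G, φ v = u}

/-- `O` is an orbit of `Aut(G)` on vertices. -/
def IsOrbit {V : Type*} (G : SimpleGraph V) (O : Set V) : Prop :=
  ∃ v, O = GraphOrbit G v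

/-- `O` is a terminal orbit-candidate set: for every `u ∉ O` and `v ∈ O` there is a
`u`–`v` path meeting `O` only in `v`. -/
def IsTerminalSet {V : Type*} (G : SimpleGraph V) (O : Set V) : Prop :=
  ∀ u ∉ O, ∀ v ∈ O, ∃ p : G.Walk u v, p.IsPath ∧ {x | x ∈ p.support} ∩ O = {v}

/-- `G` is vertex-transitive. -/
def IsVertexTransitive {V : Type*} (G : SimpleGraph V) : Prop :=
  ∀ u v : V, ∃ φ : G ≃g G, φ u = v

private lemma aux_first {V : Type*} (G : SimpleGraph V) (O : Set V)
    (htwins : ∀ u ∈ O, ∀ v ∈ O, G.neighborSet u = G.neighborSet v) :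
    ∀ {u v : V} (p : G.Walk u v), u ∉ O → v ∈ O →
      ∃ x, ∃ q : G.Walk u x, G.Adj x v ∧ ∀ y ∈ q.support, y ∉ O := by
  intro u v p
  induction p with
  | nil => intro hu hv; exact absurd hv hu
  | @cons a b c hab p ih =>
    intro hu hv
    by_cases hb : b ∈ O
    · refine ⟨a, SimpleGraph.Walk.nil, ?_, ?_⟩
      · have h1 : a ∈ G.neighborSet b := hab.symm
        rw [htwins b hb c hv] at h1
        exact h1.symm
      · intro y hy
        simp only [SimpleGraph.Walk.support_nil, List.mem_singleton] at hy
        subst hy; exact hu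
    · obtain ⟨x, q, hadj, hq⟩ := ih hb hv
      refine ⟨x, SimpleGraph.Walk.cons hab q, hadj, ?_⟩
      intro y hy
      rw [SimpleGraph.Walk.support_cons, List.mem_cons] at hy
      rcases hy with rfl | hy
      · exact hu
      · exact hq y hy

theorem stmt2 {V : Type*} [Fintype V] (G : SimpleGraph V) (hconn : G.Connected)
    (O : Set V) (hO : IsOrbit G O)
    (htwins : ∀ u ∈ O, ∀ v ∈ O, G.neighborSet u = G.neighborSet v) :
    IsTerminalSet G O := by
  classical
  intro u hu v hv
  obtain ⟨p⟩ := hconn.preconnected u v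
  obtain ⟨x, q, hadj, hq⟩ := aux_first G O htwins p hu hv
  have hq'path : (q.toPath : G.Walk u x).IsPath := q.toPath.2
  have hq'O : ∀ y ∈ (q.toPath : G.Walk u x).support, y ∉ O := fun y hy =>
    hq y (SimpleGraph.Walk.support_toPath_subset q hy)
  have hvq' : v ∉ (q.toPath : G.Walk u x).support := fun h => hq'O v h hv
  have hvrev : v ∉ (q.toPath : G.Walk u x).reverse.support := by
    rwa [SimpleGraph.Walk.support_reverse, List.mem_reverse]
  refine ⟨(SimpleGraph.Walk.cons hadj.symm (q.toPath : G.Walk u x).reverse).reverse,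
    (hq'path.reverse.cons hvrev).reverse, ?_⟩
  ext y
  simp only [Set.mem_inter_iff, Set.mem_setOf_eq, Set.mem_singleton_iff,
    SimpleGraph.Walk.support_reverse, List.mem_reverse,
    SimpleGraph.Walk.support_cons, List.mem_cons]
  constructor
  · rintro ⟨rfl | hy1, hyO⟩
    · rfl
    · exact absurd hyO (hq'O y hy1)
  · rintro rfl
    exact ⟨Or.inl rfl, hv⟩
end

section
/- Let G be a finite connected non-vertex-transitive graph. If some proper nonempty union of orbits of Aut(G) induces a connected subgraph of G, then G admits a terminal orbit. -/
private lemma dist_iso {V : Type*} {G : SimpleGraph V} (hconn : G.Connected)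
    (φ : G ≃g G) (u v : V) : G.dist (φ u) (φ v) = G.dist u v := by
  have key : ∀ (ψ : G ≃g G) (a b : V), G.dist (ψ a) (ψ b) ≤ G.dist a b := by
    intro ψ a b
    obtain ⟨p, hp⟩ := hconn.exists_walk_length_eq_dist a b
    calc G.dist (ψ a) (ψ b) ≤ (p.map ψ.toHom).length := SimpleGraph.dist_le _
      _ = p.length := SimpleGraph.Walk.length_map _ _
      _ = G.dist a b := hp
  refine le_antisymm (key φ u v) ?_
  have := key φ.symm (φ u) (φ v)
  simpa using this

private lemma orbit_self {V : Type*} (G : SimpleGraph V) (v : V) : v ∈ GraphOrbit G v :=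
  ⟨RelIso.refl _, rfl⟩

private lemma orbit_eq_of_mem {V : Type*} (G : SimpleGraph V) {u v : V}
    (h : u ∈ GraphOrbit G v) : GraphOrbit G u = GraphOrbit G v := by
  obtain ⟨ψ, hψ⟩ := h
  ext x
  constructor
  · rintro ⟨χ, rfl⟩
    exact ⟨ψ.trans χ, by simp [hψ]⟩
  · rintro ⟨χ, rfl⟩
    exact ⟨ψ.symm.trans χ, by simp [← hψ]⟩

theorem stmt3 {V : Type*} [Fintype V] (G : SimpleGraph V) (hconn : G.Connected)
    (hnt : ¬ IsVertexTransitive G)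
    (S : Set (Set V)) (hSorb : ∀ O ∈ S, IsOrbit G O) (hSne : S.Nonempty)
    (hSprop : ∃ O : Set V, IsOrbit G O ∧ O ∉ S)
    (hSconn : (G.induce (⋃₀ S)).Connected) :
    ∃ O : Set V, IsOrbit G O ∧ IsTerminalSet G O := by
  classical
  set U : Set V := ⋃₀ S with hU
  -- U is nonempty
  obtain ⟨O₁, hO₁S⟩ := hSne
  obtain ⟨v₁, rfl⟩ := hSorb O₁ hO₁S
  have hUne : U.Nonempty := ⟨v₁, Set.mem_sUnion.mpr ⟨_, hO₁S, orbit_self G v₁⟩⟩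
  -- U is invariant under automorphisms
  have hUinv : ∀ (φ : G ≃g G) (a : V), a ∈ U → φ a ∈ U := by
    rintro φ a ha
    obtain ⟨O', hO'S, haO'⟩ := ha
    obtain ⟨v', hv'⟩ := hSorb O' hO'S
    rw [hv'] at haO'
    obtain ⟨ψ, rfl⟩ := haO'
    exact Set.mem_sUnion.mpr ⟨_, hO'S, by rw [hv']; exact ⟨ψ.trans φ, rfl⟩⟩
  -- distance to U
  set f : V → ℕ := fun x => sInf ((fun a => G.dist x a) '' U) with hf
  have attain : ∀ x, ∃ a ∈ U, G.dist x a = f x := by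
    intro x
    have : f x ∈ (fun a => G.dist x a) '' U := Nat.sInf_mem (hUne.image _)
    obtain ⟨a, ha, hd⟩ := this
    exact ⟨a, ha, hd⟩
  have f_le : ∀ x a, a ∈ U → f x ≤ G.dist x a := fun x a ha =>
    Nat.sInf_le ⟨a, ha, rfl⟩
  have f_memU : ∀ a ∈ U, f a = 0 := by
    intro a ha
    have := f_le a a ha
    simpa [SimpleGraph.dist_self] using this
  have f_zero : ∀ x, f x = 0 → x ∈ U := by
    intro x hx
    obtain ⟨a, ha, hd⟩ := attain x
    rw [hx] at hd
    rwa [(hconn x a).dist_eq_zero_iff.mp hd]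
  have f_inv : ∀ (φ : G ≃g G) (x : V), f (φ x) = f x := by
    have key : ∀ (φ : G ≃g G) (x : V), f (φ x) ≤ f x := by
      intro φ x
      obtain ⟨a, ha, hd⟩ := attain x
      calc f (φ x) ≤ G.dist (φ x) (φ a) := f_le _ _ (hUinv φ a ha)
        _ = G.dist x a := dist_iso hconn φ x a
        _ = f x := hd
    intro φ x
    refine le_antisymm (key φ x) ?_
    have := key φ.symm (φ x)
    simpa using this
  -- descent towards U
  have descent : ∀ x, f x ≠ 0 → ∃ y, G.Adj x y ∧ f y < f x := by
    intro x hx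
    obtain ⟨a, ha, hd⟩ := attain x
    obtain ⟨p, hp⟩ := (hconn x a).exists_walk_length_eq_dist
    rw [hd] at hp
    cases p with
    | nil => exact absurd hp.symm (by simpa using hx)
    | @cons _ y _ h q =>
        refine ⟨y, h, ?_⟩
        have hq : q.length + 1 = f x := by simpa using hp
        have : f y ≤ q.length := le_trans (f_le y a ha) (SimpleGraph.dist_le q)
        omega
  -- walks to U whose interior has strictly smaller f
  have walkUaux : ∀ (n : ℕ) (x : V), f x ≤ n → ∃ (a : V), a ∈ U ∧ ∃ p : G.Walk x a,
      ∀ z ∈ p.support, z = x ∨ f z < f x := by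
    intro n
    induction n with
    | zero =>
      intro x hx
      exact ⟨x, f_zero x (Nat.le_zero.mp hx), SimpleGraph.Walk.nil, by simp⟩
    | succ n ih =>
      intro x hx
      by_cases hx0 : f x = 0
      · exact ⟨x, f_zero x hx0, SimpleGraph.Walk.nil, by simp⟩
      · obtain ⟨y, hadj, hlt⟩ := descent x hx0
        obtain ⟨a, ha, q, hq⟩ := ih y (by omega)
        refine ⟨a, ha, SimpleGraph.Walk.cons hadj q, ?_⟩
        intro z hz
        rw [SimpleGraph.Walk.support_cons, List.mem_cons] at hz
        rcases hz with rfl | hz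
        · exact Or.inl rfl
        · rcases hq z hz with rfl | h
          · exact Or.inr hlt
          · exact Or.inr (lt_trans h hlt)
  have walkU : ∀ x, ∃ (a : V), a ∈ U ∧ ∃ p : G.Walk x a,
      ∀ z ∈ p.support, z = x ∨ f z < f x := fun x => walkUaux (f x) x le_rfl
  -- pick w maximizing f
  have hVne : Nonempty V := ⟨v₁⟩
  obtain ⟨w, -, hwmax⟩ := Finset.exists_max_image (Finset.univ : Finset V) f
    ⟨v₁, Finset.mem_univ _⟩
  have hwmax : ∀ x, f x ≤ f w := fun x => hwmax x (Finset.mem_univ x)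
  -- f w ≠ 0
  obtain ⟨O₀, hO₀orb, hO₀S⟩ := hSprop
  obtain ⟨v₀, rfl⟩ := hO₀orb
  have hv₀U : v₀ ∉ U := by
    intro hv₀
    obtain ⟨O', hO'S, hmem⟩ := hv₀
    obtain ⟨v', hv'⟩ := hSorb O' hO'S
    rw [hv'] at hmem
    exact hO₀S (by rw [orbit_eq_of_mem G hmem, ← hv']; exact hO'S)
  have hfw : f w ≠ 0 := by
    intro h0
    exact hv₀U (f_zero v₀ (Nat.le_zero.mp (h0 ▸ hwmax v₀)))
  -- the terminal orbit
  refine ⟨GraphOrbit G w, ⟨w, rfl⟩, ?_⟩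
  have hOf : ∀ z ∈ GraphOrbit G w, f z = f w := by
    rintro z ⟨φ, rfl⟩; exact f_inv φ w
  intro u hu v hv
  have hfv : f v = f w := hOf v hv
  -- walk from u to U avoiding the orbit
  obtain ⟨a, ha, p, hp⟩ := walkU u
  have hpO : ∀ z ∈ p.support, z ∉ GraphOrbit G w := by
    intro z hz hzO
    rcases hp z hz with rfl | hlt
    · exact hu hzO
    · have := hOf z hzO
      have := hwmax u
      omega
  -- walk from v to U meeting the orbit only at v
  obtain ⟨b, hb, q, hq⟩ := walkU v
  have hqO : ∀ z ∈ q.support, z ∈ GraphOrbit G w → z = v := by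
    intro z hz hzO
    rcases hq z hz with rfl | hlt
    · rfl
    · have := hOf z hzO
      omega
  -- orbit is disjoint from U
  have hOU : ∀ z ∈ GraphOrbit G w, z ∉ U := by
    intro z hz hzU
    exact hfw (by rw [← hOf z hz]; exact f_memU z hzU)
  -- walk inside U from a to b
  have hr := (hSconn ⟨a, ha⟩ ⟨b, hb⟩).some
  let ι : G.induce U →g G := ⟨Subtype.val, fun h => h⟩
  let r : G.Walk a b := hr.map ι
  have hrO : ∀ z ∈ r.support, z ∉ GraphOrbit G w := by
    intro z hz
    rw [SimpleGraph.Walk.support_map, List.mem_map] at hz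
    obtain ⟨z₀, -, rfl⟩ := hz
    exact fun hzO => hOU _ hzO z₀.2
  -- assemble
  let W : G.Walk u v := p.append (r.append q.reverse)
  have hWO : ∀ z ∈ W.support, z ∈ GraphOrbit G w → z = v := by
    intro z hz hzO
    rw [SimpleGraph.Walk.mem_support_append_iff, SimpleGraph.Walk.mem_support_append_iff,
      SimpleGraph.Walk.support_reverse, List.mem_reverse] at hz
    rcases hz with hz | hz | hz
    · exact absurd hzO (hpO z hz)
    · exact absurd hzO (hrO z hz)
    · exact hqO z hz hzO
  refine ⟨W.bypass, SimpleGraph.Walk.bypass_isPath W, ?_⟩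
  ext x
  simp only [Set.mem_inter_iff, Set.mem_setOf_eq, Set.mem_singleton_iff]
  constructor
  · rintro ⟨hx, hxO⟩
    exact hWO x (SimpleGraph.Walk.support_bypass_subset W hx) hxO
  · rintro rfl
    exact ⟨SimpleGraph.Walk.end_mem_support _, hv⟩
end

section
/- Let G be a finite connected non-vertex-transitive graph with no terminal orbit. Then for every orbit O of Aut(G), the subgraph of G induced by O is disconnected. -/
namespace SimpleGraph

variable {V W : Type*} {G : SimpleGraph V} {G' : SimpleGraph W} {S T : Set V} {x : V}

theorem Reachable.dist_map_le (f : G →g G') {u v : V} (h : G.Reachable u v) :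
    G'.dist (f u) (f v) ≤ G.dist u v := by
  obtain ⟨p, hp⟩ := h.exists_walk_length_eq_dist
  exact (dist_le (p.map f)).trans_eq ((p.length_map f).trans hp)

theorem Iso.dist_map (φ : G ≃g G') (u v : V) : G'.dist (φ u) (φ v) = G.dist u v := by
  by_cases h : G.Reachable u v
  · refine le_antisymm (h.dist_map_le φ.toHom) ?_
    have h' : G'.Reachable (φ u) (φ v) := Iso.reachable_iff.2 h
    simpa using h'.dist_map_le φ.symm.toHom
  · rw [dist_eq_zero_of_not_reachable h,
      dist_eq_zero_of_not_reachable (mt Iso.reachable_iff.1 h)]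

/-- Junk value `0` when `S` is empty. -/
noncomputable def infDist (G : SimpleGraph V) (x : V) (S : Set V) : ℕ :=
  sInf (G.dist x '' S)

theorem infDist_le {o : V} (ho : o ∈ S) : G.infDist x S ≤ G.dist x o :=
  Nat.sInf_le ⟨o, ho, rfl⟩

theorem exists_dist_eq_infDist (G : SimpleGraph V) (x : V) (hS : S.Nonempty) :
    ∃ o ∈ S, G.dist x o = G.infDist x S :=
  Nat.sInf_mem (hS.image _)

theorem Connected.infDist_eq_zero_iff (hconn : G.Connected) (hS : S.Nonempty) :
    G.infDist x S = 0 ↔ x ∈ S := by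
  refine ⟨fun h => ?_, fun hx => Nat.le_zero.1 ((infDist_le hx).trans_eq dist_self)⟩
  obtain ⟨o, ho, hxo⟩ := G.exists_dist_eq_infDist x hS
  rwa [hconn.dist_eq_zero_iff.1 (hxo.trans h)]

theorem Iso.infDist_map (φ : G ≃g G) (hS : φ ⁻¹' S = S) (x : V) :
    G.infDist (φ x) S = G.infDist x S := by
  have himage : φ '' S = S := by
    conv_lhs => rw [← hS]
    exact Set.image_preimage_eq S φ.surjective
  unfold infDist
  conv_lhs => rw [← himage, Set.image_image]
  simp only [φ.dist_map]

/-- The walk is a geodesic from `x` to a nearest point of `S`. -/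
theorem Connected.exists_walk_infDist_lt (hconn : G.Connected) (hS : S.Nonempty) (x : V) :
    ∃ o ∈ S, ∃ p : G.Walk x o,
      ∀ y ∈ p.support, y ≠ x → G.infDist y S < G.infDist x S := by
  classical
  obtain ⟨o, ho, hxo⟩ := G.exists_dist_eq_infDist x hS
  obtain ⟨p, hp⟩ := hconn.exists_walk_length_eq_dist x o
  refine ⟨o, ho, p, fun y hy hyx => ?_⟩
  have htake : (p.takeUntil y hy).length ≠ 0 := fun h => hyx (Walk.eq_of_length_eq_zero h).symm
  have hsplit := congrArg Walk.length (p.take_spec hy)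
  rw [Walk.length_append] at hsplit
  calc G.infDist y S ≤ G.dist y o := infDist_le ho
    _ ≤ (p.dropUntil y hy).length := dist_le _
    _ < G.dist x o := by omega
    _ = G.infDist x S := hxo

theorem exists_walk_support_subset_of_connected_induce (hS : (G.induce S).Connected) {a b : V}
    (ha : a ∈ S) (hb : b ∈ S) : ∃ p : G.Walk a b, ∀ y ∈ p.support, y ∈ S := by
  obtain ⟨q⟩ := hS.preconnected ⟨a, ha⟩ ⟨b, hb⟩
  refine ⟨q.map (Embedding.induce S).toHom, fun y hy => ?_⟩
  obtain ⟨z, -, rfl⟩ := List.mem_map.1 (Walk.support_map _ _ ▸ hy)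
  exact z.2

theorem isTerminalSet_of_forall_exists_walk
    (h : ∀ u ∉ T, ∀ v ∈ T, ∃ p : G.Walk u v, ∀ y ∈ p.support, y ∈ T → y = v) :
    IsTerminalSet G T := by
  classical
  intro u hu v hv
  obtain ⟨p, hp⟩ := h u hu v hv
  refine ⟨p.bypass, p.bypass_isPath, Set.ext fun y => ⟨?_, ?_⟩⟩
  · rintro ⟨hy, hyT⟩
    exact hp y (p.support_bypass_subset_support hy) hyT
  · rintro rfl
    exact ⟨p.bypass.end_mem_support, hv⟩

theorem isTerminalSet_of_infDist_max (hconn : G.Connected) (hS : (G.induce S).Connected) {m : ℕ}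
    (hm : 0 < m) (hmax : ∀ x, G.infDist x S ≤ m) (hT : ∀ y ∈ T, G.infDist y S = m) :
    IsTerminalSet G T := by
  have hSne : S.Nonempty := by
    obtain ⟨⟨a, ha⟩⟩ := hS.nonempty
    exact ⟨a, ha⟩
  refine isTerminalSet_of_forall_exists_walk fun x hx v hv => ?_
  obtain ⟨o₁, ho₁, p₁, hp₁⟩ := hconn.exists_walk_infDist_lt hSne x
  obtain ⟨o₂, ho₂, p₂, hp₂⟩ := hconn.exists_walk_infDist_lt hSne v
  obtain ⟨q, hq⟩ := exists_walk_support_subset_of_connected_induce hS ho₁ ho₂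
  refine ⟨p₁.append (q.append p₂.reverse), fun y hy hyT => ?_⟩
  have hy_max := hT y hyT
  simp only [Walk.mem_support_append_iff, Walk.support_reverse, List.mem_reverse] at hy
  rcases hy with hy | hy | hy
  · have hyx : y ≠ x := fun h => hx (h ▸ hyT)
    have := hp₁ y hy hyx
    have := hmax x
    omega
  · have := (hconn.infDist_eq_zero_iff hSne).2 (hq y hy)
    omega
  · by_contra hyv
    have := hp₂ y hy hyv
    have := hT v hv
    omega

end SimpleGraph

open SimpleGraph

theorem mem_graphOrbit_self {V : Type*} {G : SimpleGraph V} (v : V) : v ∈ GraphOrbit G v :=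
  ⟨RelIso.refl _, rfl⟩

theorem preimage_graphOrbit {V : Type*} {G : SimpleGraph V} (φ : G ≃g G) (v : V) :
    φ ⁻¹' GraphOrbit G v = GraphOrbit G v := by
  ext x
  constructor
  · rintro ⟨ψ, hψ⟩
    exact ⟨ψ.trans φ.symm, by simp [hψ]⟩
  · rintro ⟨ψ, rfl⟩
    exact ⟨ψ.trans φ, rfl⟩

theorem isVertexTransitive_of_forall_mem_graphOrbit {V : Type*} {G : SimpleGraph V} {v : V}
    (h : ∀ x, x ∈ GraphOrbit G v) : IsVertexTransitive G := by
  intro a b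
  obtain ⟨ψ, rfl⟩ := h a
  obtain ⟨χ, rfl⟩ := h b
  exact ⟨ψ.symm.trans χ, by simp⟩

theorem stmt4 {V : Type*} [Fintype V] (G : SimpleGraph V) (hconn : G.Connected)
    (hnt : ¬ IsVertexTransitive G)
    (hnoterm : ¬ ∃ O : Set V, IsOrbit G O ∧ IsTerminalSet G O) :
    ∀ O : Set V, IsOrbit G O → ¬ (G.induce O).Connected := by
  rintro _ ⟨w, rfl⟩ hO
  set S := GraphOrbit G w
  have : Nonempty V := hconn.nonempty
  obtain ⟨u, hu⟩ := Finite.exists_max fun x => G.infDist x S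
  have hSne : S.Nonempty := ⟨w, mem_graphOrbit_self w⟩
  have hpos : 0 < G.infDist u S := by
    by_contra! h0
    have hS_univ : ∀ x, x ∈ S := fun x =>
      (hconn.infDist_eq_zero_iff hSne).1 (Nat.le_zero.1 ((hu x).trans h0))
    exact hnt (isVertexTransitive_of_forall_mem_graphOrbit hS_univ)
  have hu_orbit : ∀ y ∈ GraphOrbit G u, G.infDist y S = G.infDist u S := by
    rintro _ ⟨φ, rfl⟩
    exact φ.infDist_map (preimage_graphOrbit φ w) u
  exact hnoterm
    ⟨GraphOrbit G u, ⟨u, rfl⟩, isTerminalSet_of_infDist_max hconn hO hpos hu hu_orbit⟩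
end

section
/- In the complete bipartite graph K_{m,n} with 2 ≤ m < n, neither orbit (bipartition side) induces a connected subgraph, yet both orbits are terminal. Hence the converse of the statement 'a proper connected union of orbits implies a terminal orbit' fails. -/
open SimpleGraph Set

namespace SimpleGraph

variable {V : Type*} (G : SimpleGraph V)

theorem isTerminalSet_of_forall_adj {O : Set V} (h : ∀ u ∉ O, ∀ v ∈ O, G.Adj u v) :
    IsTerminalSet G O := by
  intro u hu v hv
  refine ⟨(h u hu v hv).toWalk, by simpa using (h u hu v hv).ne, ?_⟩
  ext x
  simp only [Walk.support_cons, Walk.support_nil, List.mem_cons, List.not_mem_nil,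
    or_false, mem_inter_iff, mem_ofPred_eq, mem_singleton_iff]
  constructor
  · rintro ⟨rfl | rfl, hx⟩
    exacts [absurd hx hu, rfl]
  · rintro rfl
    exact ⟨Or.inr rfl, hv⟩

variable {α β : Type*}

theorem induce_range_inl_completeBipartiteGraph :
    (completeBipartiteGraph α β).induce (range Sum.inl) = ⊥ := by
  ext ⟨_, a, rfl⟩ ⟨_, b, rfl⟩
  simp

theorem induce_range_inr_completeBipartiteGraph :
    (completeBipartiteGraph α β).induce (range Sum.inr) = ⊥ := by
  ext ⟨_, a, rfl⟩ ⟨_, b, rfl⟩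
  simp

theorem isTerminalSet_range_inl_completeBipartiteGraph :
    IsTerminalSet (completeBipartiteGraph α β) (range Sum.inl) := by
  refine isTerminalSet_of_forall_adj _ ?_
  rintro (a | b) hu _ ⟨a', rfl⟩
  exacts [absurd ⟨a, rfl⟩ hu, by simp]

theorem isTerminalSet_range_inr_completeBipartiteGraph :
    IsTerminalSet (completeBipartiteGraph α β) (range Sum.inr) := by
  refine isTerminalSet_of_forall_adj _ ?_
  rintro (a | b) hu _ ⟨b', rfl⟩
  exacts [by simp, absurd ⟨b, rfl⟩ hu]

end SimpleGraph

theorem stmt7 (m n : ℕ) (hm : 2 ≤ m) (hmn : m < n) :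
    let G := completeBipartiteGraph (Fin m) (Fin n)
    let A : Set (Fin m ⊕ Fin n) := Set.range Sum.inl
    let B : Set (Fin m ⊕ Fin n) := Set.range Sum.inr
    ¬ (G.induce A).Connected ∧ ¬ (G.induce B).Connected ∧
      IsTerminalSet G A ∧ IsTerminalSet G B := by
  intro G A B
  have : Nontrivial (Fin m) := Fin.nontrivial_iff_two_le.mpr hm
  have : Nontrivial (Fin n) := Fin.nontrivial_iff_two_le.mpr (by omega)
  have : Nontrivial A := (Equiv.ofInjective _ Sum.inl_injective).symm.nontrivial
  have : Nontrivial B := (Equiv.ofInjective _ Sum.inr_injective).symm.nontrivial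
  exact ⟨induce_range_inl_completeBipartiteGraph ▸ not_connected_bot,
    induce_range_inr_completeBipartiteGraph ▸ not_connected_bot,
    isTerminalSet_range_inl_completeBipartiteGraph,
    isTerminalSet_range_inr_completeBipartiteGraph⟩
end
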